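/- arXiv:2402.00144 — 5 statements merged into one kernel-verified Lean document; each statement's English description precedes it below -/
import Mathlib

section
/- For every b : ω → ω with b(n) ≥ 1 for all n, letting I_n = [n(n+1)/2, n(n+1)/2 + n] (so ⟨I_n⟩ is the partition of ω into consecutive intervals with |I_n| = n+1) and c_b(n) = ∏_{i∈I_n} b(i), the relational system E_b is Tukey below Lc_0(c_b, id): explicitly, there are maps Ψ₋ : ∏b → ∏c_b, where Ψ₋(x)(n) codes the restriction x↾I_n, and Ψ₊ assigning to each pair (φ, w), where φ is a slalom with φ(n) ⊆ c_b(n) and |φ(n)| ≤ n for all n and w ⊆ ω is infinite, a ∏b-predictor Ψ₊(φ,w), such that for every x ∈ ∏b: if Ψ₋(x)(n) ∈ φ(n) for all but finitely many n ∈ w, then Ψ₊(φ,w) predicts x. -/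
/-- The `n`-th interval `I_n = [n(n+1)/2, n(n+1)/2 + n]` of the partition of
`ω` into consecutive intervals with `|I_n| = n + 1`. -/
def Ivl (n : ℕ) : Set ℕ := Set.Icc (n * (n + 1) / 2) (n * (n + 1) / 2 + n)

/-- `c_b(n) = ∏_{i ∈ I_n} b i`, realized as the set (type) of functions
`I_n → ⋃ b` with values `x i < b i`; an element of it codes a restriction
`x ↾ I_n`. -/
def Cb (b : ℕ → ℕ) (n : ℕ) : Type := (i : Ivl n) → Fin (b i)

/-- `Ψ₋ : ∏b → ∏c_b`, `Ψ₋(x)(n)` codes the restriction `x ↾ I_n`. -/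
def ΨMinus (b : ℕ → ℕ) (x : ∀ n, Fin (b n)) : ∀ n, Cb b n := fun _ i => x i

/-- A `∏b`-predictor: an infinite `D ⊆ ω` together with maps
`π n : ∏_{k<n} b k → b n`. -/
structure Predictor (b : ℕ → ℕ) where
  D : Set ℕ
  infinite : D.Infinite
  pr : ∀ n : ℕ, ((k : Fin n) → Fin (b k)) → Fin (b n)

/-- `π` predicts `f` iff `f n = π n (f↾n)` for all but finitely many `n ∈ D`. -/
def Predictor.Predicts {b : ℕ → ℕ} (π : Predictor b) (f : ∀ n, Fin (b n)) :
    Prop :=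
  {n ∈ π.D | f n ≠ π.pr n fun k => f k}.Finite

/-!
Call a position `m ∈ I_n` splitting for `φ n` if two members of `φ n` agree below `m` but differ
at `m`. Each splitting position strictly increases the number of distinct restrictions of members
of `φ n` to the positions up to it, so there are at most `|φ n| < |I_n|` of them, and `I_n` has a
non-splitting position `m_n`. The predictor `Ψ₊(φ, w)` lives on `{m_n | n ∈ w}` and
guesses `x m_n` as the value of any member of `φ n` consistent with `x ↾ m_n`; that guess is
right whenever `Ψ₋(x)(n) ∈ φ n`.
-/

open Set

open scoped Classical in
theorem card_image_domRestrict_mono {α : Type*} {β : α → Type*} (S : Finset (∀ a, β a))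
    {T T' : Set α} (h : T ⊆ T') :
    (S.image T.domRestrict).card ≤ (S.image T'.domRestrict).card := by
  rw [← domRestrict₂_comp_domRestrict h, ← Finset.image_image]
  exact Finset.card_image_le

section Splitting

variable {ι : Type*} [LinearOrder ι] {β : ι → Type*}

def SplitsAt (S : Finset (∀ i, β i)) (a : ι) : Prop :=
  ∃ y ∈ S, ∃ z ∈ S, (∀ i < a, y i = z i) ∧ y a ≠ z a

open scoped Classical

theorem SplitsAt.card_image_domRestrict_Iio_lt {S : Finset (∀ i, β i)} {a : ι}
    (h : SplitsAt S a) :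
    (S.image (Iio a).domRestrict).card < (S.image (Iic a).domRestrict).card := by
  obtain ⟨y, hy, z, hz, hyz, hne⟩ := h
  rw [← domRestrict₂_comp_domRestrict Iio_subset_Iic_self, ← Finset.image_image]
  refine Finset.card_image_le.lt_of_ne fun hcard => hne ?_
  have hyz' := Finset.card_image_iff.mp hcard (Finset.mem_image_of_mem _ hy)
    (Finset.mem_image_of_mem _ hz) (funext fun i => hyz i i.2)
  exact congrFun hyz' ⟨a, le_rfl⟩

theorem card_le_card_image_domRestrict (S : Finset (∀ i, β i)) (L : Finset ι)
    (hL : ∀ a ∈ L, SplitsAt S a) {T : Set ι} (hT : ∀ a ∈ L, Iic a ⊆ T) :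
    L.card ≤ (S.image T.domRestrict).card := by
  induction L using Finset.induction_on_max generalizing T with
  | empty => simp
  | insert a s hlt ih =>
    have ha : a ∉ s := fun h => lt_irrefl a (hlt a h)
    have hs : s.card ≤ (S.image (Iio a).domRestrict).card :=
      ih (fun x hx => hL x (Finset.mem_insert_of_mem hx))
        fun x hx => Iic_subset_Iio.mpr (hlt x hx)
    calc (insert a s).card = s.card + 1 := Finset.card_insert_of_notMem ha
      _ ≤ (S.image (Iio a).domRestrict).card + 1 := Nat.add_le_add_right hs 1
      _ ≤ (S.image (Iic a).domRestrict).card :=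
        (hL a (Finset.mem_insert_self a s)).card_image_domRestrict_Iio_lt
      _ ≤ (S.image T.domRestrict).card :=
        card_image_domRestrict_mono S (hT a (Finset.mem_insert_self a s))

theorem exists_not_splitsAt [Finite ι] {S : Finset (∀ i, β i)} (hS : S.card < Nat.card ι) :
    ∃ a, ¬ SplitsAt S a := by
  by_contra! h
  have hfin := Set.toFinite (univ : Set ι)
  have hcard := card_le_card_image_domRestrict S hfin.toFinset (fun a _ => h a)
    fun _ _ => subset_univ _
  rw [← ncard_eq_toFinset_card _ hfin, ncard_univ] at hcard
  exact hS.not_ge (hcard.trans Finset.card_image_le)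

end Splitting

theorem Ivl_eq_Ico (n : ℕ) : Ivl n = Ico (n * (n + 1) / 2) ((n + 1) * (n + 1 + 1) / 2) := by
  have hsucc : (n + 1) * (n + 1 + 1) / 2 = n * (n + 1) / 2 + n + 1 := by
    rw [show (n + 1) * (n + 1 + 1) = n * (n + 1) + (n + 1) * 2 by ring,
      Nat.add_mul_div_right _ _ two_pos, add_assoc]
  ext m
  simp only [Ivl, mem_Icc, mem_Ico, hsucc]
  omega

theorem eq_of_mem_Ivl {m n n' : ℕ} (h : m ∈ Ivl n) (h' : m ∈ Ivl n') : n = n' := by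
  have hmono : Monotone fun n : ℕ => n * (n + 1) / 2 := fun _ _ hle =>
    Nat.div_le_div_right (Nat.mul_le_mul hle (Nat.add_le_add_right hle 1))
  by_contra hne
  rw [Ivl_eq_Ico] at h h'
  exact Set.disjoint_left.mp (hmono.pairwise_disjoint_on_Ico_succ hne) h h'

theorem natCard_Ivl (n : ℕ) : Nat.card (Ivl n) = n + 1 := by
  rw [Nat.card_coe_set_eq, Ivl, Set.ncard_Icc_nat]
  omega

instance (n : ℕ) : Nonempty (Ivl n) := ⟨⟨n * (n + 1) / 2, by simp [Ivl]⟩⟩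

instance (n : ℕ) : Finite (Ivl n) := (Set.finite_Icc _ _).to_subtype

section Prediction

variable {b : ℕ → ℕ}

noncomputable def nonsplitPos (φ : ∀ n, Finset (Cb b n)) (n : ℕ) : Ivl n :=
  Classical.epsilon fun a => ¬ SplitsAt (φ n) a

theorem not_splitsAt_nonsplitPos {φ : ∀ n, Finset (Cb b n)} {n : ℕ} (hφ : (φ n).card ≤ n) :
    ¬ SplitsAt (φ n) (nonsplitPos φ n) :=
  Classical.epsilon_spec (exists_not_splitsAt (by rw [natCard_Ivl]; exact Nat.lt_succ_of_le hφ))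

theorem nonsplitPos_injective (φ : ∀ n, Finset (Cb b n)) :
    Function.Injective fun n => (nonsplitPos φ n : ℕ) :=
  fun n n' h => eq_of_mem_Ivl (nonsplitPos φ n).2 <| by
    rw [show (nonsplitPos φ n : ℕ) = nonsplitPos φ n' from h]
    exact (nonsplitPos φ n').2

def Proposes (φ : ∀ n, Finset (Cb b n)) (m : ℕ) (s : (k : Fin m) → Fin (b k))
    (v : Fin (b m)) : Prop :=
  ∃ n, ∃ hm : m ∈ Ivl n, ∃ y ∈ φ n,
    (∀ i : Ivl n, (hi : (i : ℕ) < m) → y i = s ⟨i, hi⟩) ∧ y ⟨m, hm⟩ = v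

noncomputable def guess (hb : ∀ n, 1 ≤ b n) (φ : ∀ n, Finset (Cb b n)) (m : ℕ)
    (s : (k : Fin m) → Fin (b k)) : Fin (b m) :=
  @Classical.epsilon _ ⟨⟨0, hb m⟩⟩ (Proposes φ m s)

theorem guess_nonsplitPos_eq (hb : ∀ n, 1 ≤ b n) {φ : ∀ n, Finset (Cb b n)} {n : ℕ}
    (hφ : (φ n).card ≤ n) {x : ∀ n, Fin (b n)} (hx : ΨMinus b x n ∈ φ n) :
    guess hb φ (nonsplitPos φ n) (fun k => x k) = x (nonsplitPos φ n) := by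
  have hx_proposes : Proposes φ (nonsplitPos φ n) (fun k => x k) (x (nonsplitPos φ n)) :=
    ⟨n, (nonsplitPos φ n).2, _, hx, fun _ _ => rfl, rfl⟩
  obtain ⟨n', hm, y, hy, hyx, hguess⟩ := Classical.epsilon_spec ⟨_, hx_proposes⟩
  obtain rfl := eq_of_mem_Ivl hm (nonsplitPos φ n).2
  rw [guess, ← hguess]
  by_contra hne
  exact not_splitsAt_nonsplitPos hφ ⟨y, hy, _, hx, hyx, hne⟩

open scoped Classical in
noncomputable def ΨPlus (hb : ∀ n, 1 ≤ b n) (φ : ∀ n, Finset (Cb b n)) (w : Set ℕ) :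
    Predictor b where
  D := (fun n => (nonsplitPos φ n : ℕ)) '' if w.Infinite then w else univ
  infinite := by
    refine Infinite.image (nonsplitPos_injective φ).injOn ?_
    split_ifs with hw
    exacts [hw, infinite_univ]
  pr := guess hb φ

end Prediction

/-- `E_b ≼_T Lc₀(c_b, id)`: there is a map `Ψ₊` assigning to each pair `(φ, w)`
(a slalom `φ` with `φ n ⊆ c_b n`, `|φ n| ≤ n`, and an infinite `w ⊆ ω`) a
`∏b`-predictor, such that for every `x ∈ ∏b`, if `Ψ₋(x)(n) ∈ φ n` for all but
finitely many `n ∈ w`, then `Ψ₊(φ, w)` predicts `x`. -/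
theorem stmt1 (b : ℕ → ℕ) (hb : ∀ n, 1 ≤ b n) :
    ∃ ΨPlus : (∀ n, Finset (Cb b n)) → Set ℕ → Predictor b,
      ∀ (φ : ∀ n, Finset (Cb b n)) (w : Set ℕ),
        (∀ n, (φ n).card ≤ n) → w.Infinite →
          ∀ x : ∀ n, Fin (b n),
            {n ∈ w | ΨMinus b x n ∉ φ n}.Finite → (ΨPlus φ w).Predicts x := by
  refine ⟨ΨPlus hb, fun φ w hφ hw x hx =>
    (hx.image fun n => (nonsplitPos φ n : ℕ)).subset ?_⟩
  rintro _ ⟨hmD, hmiss⟩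
  simp only [ΨPlus, if_pos hw] at hmD
  obtain ⟨n, hn, rfl⟩ := hmD
  exact ⟨n, ⟨hn, fun hxn => hmiss (guess_nonsplitPos_eq hb (hφ n) hxn).symm⟩, rfl⟩
end

section
/- Let b be a function on ω with 2 ≤ b(n) ≤ ω for every n, and give the space ∏b = ∏_{n∈ω} b(n) the product topology where each factor b(n) (a set of natural numbers, possibly all of ω) is discrete. Then for every ∏b-predictor π, the set {f ∈ ∏b : π predicts f} is meager in ∏b. -/
/-!
The functions predicted by `(D, π)` from the `m`-th coordinate on form a closed set, being an
intersection of the closed conditions `f n = π n (f ↾ n)`. It has empty interior: a basic open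
set restricts only finitely many coordinates, so at some free coordinate `n ∈ D` beyond `m` we
may change `f n` to a value other than `π n (f ↾ n)` without changing `f ↾ n`. The predicted set
is the countable union of these nowhere dense sets.
-/

open Function Set Topology

variable {X : ℕ → Type*}

def predictedFrom (D : Set ℕ) (π : ∀ n, (∀ k : Fin n, X k) → X n) (m : ℕ) :
    Set (∀ n, X n) :=
  {f | ∀ n ∈ D, m ≤ n → f n = π n fun k => f k}

theorem setOf_finite_mispredictions_subset_iUnion_predictedFrom (D : Set ℕ)
    (π : ∀ n, (∀ k : Fin n, X k) → X n) :
    {f : ∀ n, X n | {n ∈ D | f n ≠ π n fun k => f k}.Finite} ⊆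
      ⋃ m, predictedFrom D π m := by
  intro f hf
  obtain ⟨m, hm⟩ := hf.bddAbove
  refine mem_iUnion.2 ⟨m + 1, fun n hn hmn => ?_⟩
  by_contra h
  have := hm ⟨hn, h⟩
  omega

theorem isClosed_predictedFrom [∀ n, TopologicalSpace (X n)] [∀ n, T2Space (X n)] (D : Set ℕ)
    {π : ∀ n, (∀ k : Fin n, X k) → X n} (hπ : ∀ n, Continuous (π n)) (m : ℕ) :
    IsClosed (predictedFrom D π m) := by
  have hrestrict (n : ℕ) : Continuous fun f : ∀ n, X n => fun k : Fin n => f k :=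
    continuous_pi fun k => continuous_apply _
  simp only [predictedFrom, ofPred_forall]
  exact isClosed_iInter fun n => isClosed_iInter fun _ => isClosed_iInter fun _ =>
    isClosed_eq (continuous_apply n) ((hπ n).comp (hrestrict n))

theorem interior_predictedFrom_eq_empty [∀ n, TopologicalSpace (X n)] [∀ n, Nontrivial (X n)]
    {D : Set ℕ} (hD : D.Infinite)
    (π : ∀ n, (∀ k : Fin n, X k) → X n) (m : ℕ) :
    interior (predictedFrom D π m) = ∅ := by
  refine eq_empty_of_forall_notMem fun f hf => ?_
  have hnhds := mem_interior_iff_mem_nhds.1 hf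
  rw [nhds_pi] at hnhds
  obtain ⟨I, hI, t, ht, hsub⟩ := Filter.mem_pi.1 hnhds
  obtain ⟨n, hnD, hn⟩ := (hD.sdiff (hI.union (finite_Iio m))).nonempty
  have hnI : n ∉ I := fun h => hn (Or.inl h)
  have hmn : m ≤ n := not_lt.1 fun h => hn (Or.inr h)
  obtain ⟨y, hy⟩ := exists_ne (π n fun k => f k)
  have hrestrict : (fun k : Fin n => update f n y k) = fun k : Fin n => f k :=
    funext fun k => update_of_ne k.isLt.ne _ _
  have hg : update f n y ∈ predictedFrom D π m := hsub fun i hi => by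
    rw [update_of_ne (ne_of_mem_of_not_mem hi hnI)]
    exact mem_of_mem_nhds (ht i)
  have := hg n hnD hmn
  rw [update_self, hrestrict] at this
  exact hy this

theorem isMeagre_setOf_predicted [∀ n, TopologicalSpace (X n)] [∀ n, T2Space (X n)]
    [∀ n, Nontrivial (X n)] {D : Set ℕ} (hD : D.Infinite) {π : ∀ n, (∀ k : Fin n, X k) → X n}
    (hπ : ∀ n, Continuous (π n)) :
    IsMeagre {f : ∀ n, X n | {n ∈ D | f n ≠ π n fun k => f k}.Finite} :=
  (isMeagre_iUnion fun m => IsNowhereDense.isMeagre <|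
      (isClosed_predictedFrom D hπ m).isNowhereDense_iff.2
        (interior_predictedFrom_eq_empty hD π m)).mono
    (setOf_finite_mispredictions_subset_iUnion_predictedFrom D π)

/-- For `b` with `2 ≤ b n ≤ ω` (each `b n` realized as a set `S n ⊆ ℕ` which is
either all of `ℕ` or an initial segment `{0, …, m-1}` with `m ≥ 2`), for every
`∏b`-predictor `(D, π)` the set of functions predicted by it is meager in the
product space `∏_n S n` (each factor discrete). -/
theorem stmt2 (S : ℕ → Set ℕ)
    (hS : ∀ n, S n = Set.univ ∨ ∃ m : ℕ, 2 ≤ m ∧ S n = Set.Iio m)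
    (D : Set ℕ) (hD : D.Infinite)
    (π : ∀ n : ℕ, ((k : Fin n) → S k) → S n) :
    IsMeagre {f : ∀ n, S n | {n ∈ D | f n ≠ π n fun k => f k}.Finite} := by
  have (n : ℕ) : Nontrivial (S n) := by
    refine nontrivial_coe_sort.2 ⟨0, ?_, 1, ?_, zero_ne_one⟩ <;>
      rcases hS n with h | ⟨m, hm, h⟩ <;> simp only [h, mem_univ, mem_Iio] <;> omega
  exact isMeagre_setOf_predicted hD fun n => continuous_of_discreteTopology
end

section
/- Let P be a ccc preorder and Q ⊆ P. Then Q is Fr-linked if and only if Q is leaf-linked, where Fr-linkedness is rendered combinatorially by the standard predensity translation of the forcing clause: Q is Fr-linked iff for every sequence ⟨p_n : n ∈ ω⟩ of elements of Q there exists q ∈ P such that for every r ≤ q and every m ∈ ω there is n ≥ m with r compatible with p_n (this is equivalent to: q forces that {n : p_n ∈ Ġ} is infinite). -/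
universe u

variable {α : Type u} [Preorder α]

/-- `p` and `q` are compatible: some `r` extends both. -/
def Compat (p q : α) : Prop := ∃ r : α, r ≤ p ∧ r ≤ q

/-- `A` is a maximal antichain: pairwise incompatible, and every condition is
compatible with a member of `A`. -/
def IsMaxAC (A : Set α) : Prop :=
  (∀ p ∈ A, ∀ q ∈ A, p ≠ q → ¬Compat p q) ∧ ∀ p : α, ∃ q ∈ A, Compat p q

/-- `Q` is leaf-linked: for every maximal antichain enumerated as `{p n : n ∈ ω}`
there is `n` such that every `q ∈ Q` is compatible with some `p j`, `j < n`. -/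
def LeafLinked (Q : Set α) : Prop :=
  ∀ p : ℕ → α, IsMaxAC (Set.range p) → ∃ n : ℕ, ∀ q ∈ Q, ∃ j < n, Compat q (p j)

/-- `D` is dense in the preorder. -/
def DenseSub (D : Set α) : Prop := ∀ p : α, ∃ q ∈ D, q ≤ p

/-- The countable chain condition: every antichain is countable. -/
def CCC (α : Type u) [Preorder α] : Prop :=
  ∀ A : Set α, (∀ p ∈ A, ∀ q ∈ A, p ≠ q → ¬Compat p q) → A.Countable

/-- `Q` is Fréchet-linked (combinatorial rendering of the forcing clause):
for every sequence in `Q` there is `q` such that below `q`, cofinally many of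
the `p n` are compatible with every extension. -/
def FrLinked (Q : Set α) : Prop :=
  ∀ p : ℕ → α, (∀ n, p n ∈ Q) →
    ∃ q : α, ∀ r ≤ q, ∀ m : ℕ, ∃ n ≥ m, Compat r (p n)

/-! If a maximal antichain `{p n}` witnesses the failure of leaf-linkedness, choose `q n ∈ Q`
incompatible with `p 0, …, p (n-1)`. Fr-linkedness gives `r` every extension of which meets
cofinally many `q n`; an extension of `r` below some `p j` then meets some `q n` with `n > j`,
a contradiction. Conversely, if a sequence in `Q` admits no such `r`, the conditions eventually
incompatible with it are dense; a maximal antichain inside them is countable by ccc, and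
leaf-linkedness bounds the finitely many of its members needed to meet `Q`, so a late enough
term of the sequence meets none of them. -/

open Filter Set

theorem Compat.symm {p q : α} (h : Compat p q) : Compat q p :=
  let ⟨r, hrp, hrq⟩ := h
  ⟨r, hrq, hrp⟩

theorem Compat.mono_left {p p' q : α} (h : Compat p q) (hp : p ≤ p') : Compat p' q :=
  let ⟨r, hrp, hrq⟩ := h
  ⟨r, hrp.trans hp, hrq⟩

theorem exists_isMaxAC_subset {D : Set α} (hD : DenseSub D) : ∃ A ⊆ D, IsMaxAC A := by
  obtain ⟨A, ⟨hAD, hA⟩, hmax⟩ :=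
    zorn_subset {A : Set α | A ⊆ D ∧ A.Pairwise (fun x y => ¬Compat x y)} fun c hc hchain =>
      ⟨⋃₀ c, ⟨sUnion_subset fun A hA => (hc hA).1,
        (pairwise_sUnion hchain.directedOn).2 fun A hA => (hc hA).2⟩,
        fun _ => subset_sUnion_of_mem⟩
  refine ⟨A, hAD, hA, fun p => ?_⟩
  obtain ⟨d, hdD, hdp⟩ := hD p
  by_contra! hp
  have hd : ∀ a ∈ A, ¬Compat d a := fun a ha h => hp a ha (h.mono_left hdp)
  have hdA : insert d A ⊆ A :=
    hmax ⟨insert_subset hdD hAD,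
      pairwise_insert.2 ⟨hA, fun a ha _ => ⟨hd a ha, fun h => hd a ha h.symm⟩⟩⟩
      (subset_insert d A)
  exact hp d (hdA (mem_insert d A)) ⟨d, hdp, le_rfl⟩

theorem CCC.exists_eq_range_of_isMaxAC [Nonempty α] (hccc : CCC α) {A : Set α}
    (hA : IsMaxAC A) : ∃ e : ℕ → α, A = range e :=
  let ⟨a, ha, _⟩ := hA.2 (Classical.arbitrary α)
  (hccc A hA.1).exists_eq_range ⟨a, ha⟩

theorem FrLinked.leafLinked {Q : Set α} (hQ : FrLinked Q) : LeafLinked Q := by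
  intro p hp
  by_contra! hno
  choose q hqQ hq using hno
  obtain ⟨r, hr⟩ := hQ q hqQ
  obtain ⟨_, ⟨j, rfl⟩, s, hsr, hsp⟩ := hp.2 r
  obtain ⟨n, hjn, t, hts, htq⟩ := hr s hsr (j + 1)
  exact hq n j hjn ⟨t, htq, hts.trans hsp⟩

theorem LeafLinked.frLinked (hccc : CCC α) {Q : Set α} (hQ : LeafLinked Q) : FrLinked Q := by
  intro p hpQ
  have : Nonempty α := ⟨p 0⟩
  by_contra! hno
  have hD : DenseSub {r | ∀ᶠ n in atTop, ¬Compat r (p n)} := fun q =>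
    let ⟨r, hrq, hr⟩ := hno q
    ⟨r, eventually_atTop.2 hr, hrq⟩
  obtain ⟨A, hAD, hA⟩ := exists_isMaxAC_subset hD
  obtain ⟨e, rfl⟩ := hccc.exists_eq_range_of_isMaxAC hA
  obtain ⟨N, hN⟩ := hQ e hA
  obtain ⟨M, hM⟩ :=
    ((eventually_all_finset (Finset.range N)).2 fun j _ => hAD (mem_range_self j)).exists
  obtain ⟨j, hjN, hpe⟩ := hN (p M) (hpQ M)
  exact hM j (Finset.mem_range.2 hjN) hpe.symm

/-- In a ccc preorder, a set is Fr-linked iff it is leaf-linked. -/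
theorem stmt3 {α : Type u} [Preorder α] (hccc : CCC α) (Q : Set α) :
    FrLinked Q ↔ LeafLinked Q :=
  ⟨FrLinked.leafLinked, LeafLinked.frLinked hccc⟩
end

section
/- Let P be a ccc preorder with a height function h : P → ω (i.e. q ≤ p implies h(q) ≥ h(p)) such that the pair ⟨P, h⟩ has the club property: (I) every ≤-decreasing sequence ⟨p_n : n ∈ ω⟩ in P with {h(p_n) : n ∈ ω} bounded by some m has a lower bound in P; (II) for every m ∈ ω and every finite non-empty set P₀ ⊆ P there is a finite set R ⊆ P such that every element of R is incompatible with every element of P₀ and, for every p ∈ P with h(p) ≤ m, if p is incompatible with every element of P₀ then p ≤ r for some r ∈ R; and (III) if p, q ∈ P are compatible then there is r with r ≤ p, r ≤ q and h(r) ≤ h(p) + h(q). Then P is σ-soft-linked. -/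
universe u

variable {α : Type u} [Preorder α]

/-- `P` is σ-soft-linked. -/
def SigmaSoftLinked (α : Type u) [Preorder α] : Prop :=
  ∃ Q : ℕ → Set α, (∀ n, LeafLinked (Q n)) ∧ DenseSub (⋃ n, Q n) ∧
    ∀ n n' : ℕ, ∃ k : ℕ, ∀ p ∈ Q n, ∀ q ∈ Q n',
      Compat p q → ∃ r ∈ Q k, r ≤ p ∧ r ≤ q



/-- iterated descent along a chosen map `g`: `dropFn g n j` maps level `n+j` to level `n`. -/
def dropFn {α : Type u} (g : ℕ → α → α) (n : ℕ) : ℕ → α → α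
  | 0, r => r
  | (j+1), r => dropFn g n j (g (n+j) r)

lemma pigeon' {α : Type u} (S : Finset α) (f : ℕ → α) (hf : ∀ j, f j ∈ S) :
    ∃ r, ∀ j, ∃ j', j ≤ j' ∧ f j' = r := by
  by_contra hcon
  push_neg at hcon
  choose b hb using hcon
  have key : ∀ j, j < b (f j) := by
    intro j
    by_contra hlt
    push_neg at hlt
    exact hb (f j) j hlt rfl
  have h1 := key (S.sup b)
  have h2 : b (f (S.sup b)) ≤ S.sup b := Finset.le_sup (hf (S.sup b))
  omega

lemma koenig' {α : Type u} [Preorder α] (T : ℕ → Finset α) (hne : ∀ n, (T n).Nonempty)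
    (hstep : ∀ n, ∀ r ∈ T (n+1), ∃ s ∈ T n, r ≤ s) :
    ∃ c : ℕ → α, (∀ n, c n ∈ T n) ∧ ∀ n, c (n+1) ≤ c n := by
  classical
  have hg : ∀ n r, ∃ s, r ∈ T (n+1) → (s ∈ T n ∧ r ≤ s) := by
    intro n r
    by_cases hr : r ∈ T (n+1)
    · obtain ⟨s, hs, hrs⟩ := hstep n r hr
      exact ⟨s, fun _ => ⟨hs, hrs⟩⟩
    · exact ⟨r, fun hmem => absurd hmem hr⟩
  choose g hgspec using hg
  have hdrop : ∀ j n r, r ∈ T (n+j) → dropFn g n j r ∈ T n ∧ r ≤ dropFn g n j r := by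
    intro j
    induction j with
    | zero => intro n r hr; exact ⟨hr, le_refl r⟩
    | succ j ih =>
      intro n r hr
      have h1 := hgspec (n+j) r hr
      have h2 := ih n (g (n+j) r) h1.1
      exact ⟨h2.1, le_trans h1.2 h2.2⟩
  have hcomp : ∀ i n j r, dropFn g n (i + j) r = dropFn g n j (dropFn g (n + j) i r) := by
    intro i
    induction i with
    | zero => intro n j r; rw [Nat.zero_add]; rfl
    | succ i ih =>
      intro n j r
      have e : (i+1) + j = (i + j) + 1 := by omega
      rw [e]
      show dropFn g n (i+j) (g (n+(i+j)) r) = dropFn g n j (dropFn g (n+j) i (g ((n+j)+i) r))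
      have e2 : n + (i+j) = (n+j) + i := by omega
      rw [e2, ih]
  set Good : ℕ → α → Prop := fun n r => ∀ j, ∃ s ∈ T (n + j), dropFn g n j s = r with hGoodDef
  have base : ∃ r, Good 0 r := by
    choose t ht using hne
    obtain ⟨r, hr⟩ := pigeon' (T 0) (fun j => dropFn g 0 j (t j))
      (fun j => (hdrop j 0 (t j) (by simpa using ht j)).1)
    refine ⟨r, fun j => ?_⟩
    obtain ⟨j', hj', he⟩ := hr j
    have hm : t j' ∈ T ((0 + j) + (j' - j)) := by
      have e2 : (0 + j) + (j' - j) = j' := by omega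
      rw [e2]; exact ht j'
    refine ⟨dropFn g (0 + j) (j' - j) (t j'), (hdrop _ _ _ hm).1, ?_⟩
    have hc := hcomp (j' - j) 0 j (t j')
    have e : j' - j + j = j' := by omega
    rw [e] at hc
    rw [← hc]
    exact he
  have step : ∀ n r, Good n r → ∃ s, s ≤ r ∧ Good (n+1) s := by
    intro n r hGd
    choose s hs hds using fun j => hGd (j + 1)
    have hmem : ∀ j, s j ∈ T ((n+1) + j) := by
      intro j
      have e : (n+1)+j = n+(j+1) := by omega
      rw [e]; exact hs j
    have hu : ∀ j, dropFn g (n+1) j (s j) ∈ T (n+1) :=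
      fun j => (hdrop j (n+1) (s j) (hmem j)).1
    have hgu : ∀ j, g n (dropFn g (n+1) j (s j)) = r := by
      intro j
      have hc := hcomp j n 1 (s j)
      rw [hds j] at hc
      exact hc.symm
    obtain ⟨u, hru⟩ := pigeon' (T (n+1)) (fun j => dropFn g (n+1) j (s j)) hu
    obtain ⟨j0, _, hj0⟩ := hru 0
    have huT : u ∈ T (n+1) := hj0 ▸ hu j0
    have hur : u ≤ r := by
      have h3 := (hgspec n u huT).2
      have h4 : g n u = r := by rw [← hj0]; exact hgu j0
      exact h4 ▸ h3
    refine ⟨u, hur, fun j => ?_⟩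
    obtain ⟨j', hj', he⟩ := hru j
    have hm : s j' ∈ T (((n+1) + j) + (j' - j)) := by
      have e2 : ((n+1) + j) + (j' - j) = (n+1) + j' := by omega
      rw [e2]; exact hmem j'
    refine ⟨dropFn g ((n+1) + j) (j' - j) (s j'), (hdrop _ _ _ hm).1, ?_⟩
    have hc := hcomp (j' - j) (n+1) j (s j')
    have e : j' - j + j = j' := by omega
    rw [e] at hc
    rw [← hc]
    exact he
  let c : (n : ℕ) → {r : α // Good n r} := fun n =>
    Nat.rec ⟨base.choose, base.choose_spec⟩
      (fun n prev => ⟨(step n prev.1 prev.2).choose, (step n prev.1 prev.2).choose_spec.2⟩) n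
  refine ⟨fun n => (c n).1, fun n => ?_, fun n => ?_⟩
  · obtain ⟨sw, hsw, hdsw⟩ := (c n).2 0
    show (c n).1 ∈ T n
    rw [← hdsw]
    exact hsw
  · exact (step n (c n).1 (c n).2).choose_spec.1
/-- A ccc preorder with a height function satisfying the club property is
σ-soft-linked. -/
theorem stmt11 {α : Type u} [Preorder α] (hccc : CCC α) (h : α → ℕ)
    (hheight : ∀ p q : α, q ≤ p → h p ≤ h q)
    (hI : ∀ p : ℕ → α, (∀ n, p (n + 1) ≤ p n) → (∃ m, ∀ n, h (p n) ≤ m) →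
      ∃ q : α, ∀ n, q ≤ p n)
    (hII : ∀ m : ℕ, ∀ P₀ : Finset α, P₀.Nonempty →
      ∃ R : Finset α, (∀ r ∈ R, ∀ p ∈ P₀, ¬Compat r p) ∧
        ∀ p : α, h p ≤ m → (∀ q ∈ P₀, ¬Compat p q) → ∃ r ∈ R, p ≤ r)
    (hIII : ∀ p q : α, Compat p q → ∃ r : α, r ≤ p ∧ r ≤ q ∧ h r ≤ h p + h q) :
    SigmaSoftLinked α := by
  classical
  refine ⟨fun n => {p : α | h p ≤ n}, ?_, ?_, ?_⟩
  · -- each Q_m is leaf-linked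
    intro m p hmax
    by_contra hcon
    push_neg at hcon
    -- for every n there is q of height ≤ m incompatible with p 0, ..., p (n-1)
    choose q hq1 hq2 using hcon
    -- roofs from (II)
    have hP0ne : ∀ n : ℕ, ((Finset.range (n+1)).image p).Nonempty :=
      fun n => Finset.Nonempty.image ⟨0, Finset.mem_range.mpr (Nat.succ_pos n)⟩ p
    choose R hR1 hR2 using fun n => hII m ((Finset.range (n+1)).image p) (hP0ne n)
    set T : ℕ → Finset α := fun n => (R n).filter (fun r => h r ≤ m) with hT
    have hTmem : ∀ n r, r ∈ T n ↔ r ∈ R n ∧ h r ≤ m := by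
      intro n r; simp [hT]
    have hRinc : ∀ n, ∀ r ∈ R n, ∀ j ≤ n, ¬Compat r (p j) := by
      intro n r hr j hj
      exact hR1 n r hr (p j) (Finset.mem_image_of_mem p (Finset.mem_range.mpr (by omega)))
    have hne : ∀ n, (T n).Nonempty := by
      intro n
      have hq2' : ∀ x ∈ (Finset.range (n+1)).image p, ¬Compat (q (n+1)) x := by
        intro x hx
        obtain ⟨j, hj, rfl⟩ := Finset.mem_image.mp hx
        exact hq2 (n+1) j (Finset.mem_range.mp hj)
      obtain ⟨r, hr, hqr⟩ := hR2 n (q (n+1)) (hq1 (n+1)) hq2'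
      exact ⟨r, (hTmem n r).mpr ⟨hr, le_trans (hheight r (q (n+1)) hqr) (hq1 (n+1))⟩⟩
    have hstep : ∀ n, ∀ r ∈ T (n+1), ∃ s ∈ T n, r ≤ s := by
      intro n r hr
      obtain ⟨hrR, hrh⟩ := (hTmem (n+1) r).mp hr
      have hrinc : ∀ x ∈ (Finset.range (n+1)).image p, ¬Compat r x := by
        intro x hx
        obtain ⟨j, hj, rfl⟩ := Finset.mem_image.mp hx
        exact hRinc (n+1) r hrR j (by have := Finset.mem_range.mp hj; omega)
      obtain ⟨s, hs, hrs⟩ := hR2 n r hrh hrinc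
      exact ⟨s, (hTmem n s).mpr ⟨hs, le_trans (hheight s r hrs) hrh⟩, hrs⟩
    obtain ⟨c, hcT, hcdec⟩ := koenig' T hne hstep
    obtain ⟨qq, hqq⟩ := hI c hcdec ⟨m, fun n => ((hTmem n (c n)).mp (hcT n)).2⟩
    obtain ⟨a, ha, hcompat⟩ := hmax.2 qq
    obtain ⟨j, rfl⟩ := ha
    obtain ⟨s, hs1, hs2⟩ := hcompat
    exact hRinc j (c j) ((hTmem j (c j)).mp (hcT j)).1 j le_rfl
      ⟨s, le_trans hs1 (hqq j), hs2⟩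
  · -- density
    intro x
    exact ⟨x, Set.mem_iUnion.mpr ⟨h x, Set.mem_setOf_eq ▸ le_rfl⟩, le_rfl⟩
  · -- directedness with controlled index
    intro n n'
    refine ⟨n + n', fun x hx y hy hcompat => ?_⟩
    obtain ⟨r, hr1, hr2, hr3⟩ := hIII x y hcompat
    exact ⟨r, le_trans hr3 (Nat.add_le_add hx hy), hr1, hr2⟩
end

section
/- Let μ be the fair-coin product probability measure on Cantor space 2^ω, let T, T' ⊆ 2^{<ω} be trees with μ([T]) > 0 and μ([T']) > 0, let s, s' ∈ 2^{<ω} with s ⊆ s', write k = |s| and k' = |s'|, and suppose [T] ⊆ [s], 2^k·μ([T]) ≥ 1 − 2^{−(m+1)}, [T'] ⊆ [s'], and 2^{k'}·μ([T']) ≥ 1 − 2^{−(m'+1)} (i.e. T ∈ B(s,m) and T' ∈ B(s',m')). Then μ([T] ∩ [s']) ≥ 2^{−k'} − 2^{−(m+k+1)}, and consequently μ([T] ∩ [T']) ≥ 2^{−k'} − 2^{−(m'+k'+1)} − 2^{−(m+k+1)}. -/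
open MeasureTheory

/-- The basic clopen cylinder `[s] = {x ∈ 2^ω : s ⊆ x}`. -/
def cyl (s : List Bool) : Set (ℕ → Bool) :=
  {x | ∀ i (h : i < s.length), x i = s[i]}

/-- `T ⊆ 2^{<ω}` is a tree: closed under initial segments. -/
def IsTree (T : Set (List Bool)) : Prop :=
  ∀ l ∈ T, ∀ l' : List Bool, l' <+: l → l' ∈ T

/-- `[T]`, the set of branches of `T`. -/
def branches (T : Set (List Bool)) : Set (ℕ → Bool) :=
  {x | ∀ n : ℕ, (List.ofFn fun i : Fin n => x i) ∈ T}

lemma measurable_cyl (s : List Bool) : MeasurableSet (cyl s) := by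
  have h : cyl s = ⋂ i : Fin s.length, (fun x : ℕ → Bool => x i) ⁻¹' {s[(i : ℕ)]} := by
    ext x
    simp only [cyl, Set.mem_iInter, Set.mem_preimage, Set.mem_singleton_iff, Set.mem_setOf_eq]
    exact ⟨fun hx i => hx i i.2, fun hx i hi => hx ⟨i, hi⟩⟩
  rw [h]
  exact MeasurableSet.iInter fun i => (measurable_pi_apply _) (measurableSet_singleton _)

lemma measurable_branches (T : Set (List Bool)) : MeasurableSet (branches T) := by
  have h : branches T = ⋂ n : ℕ, ⋃ l ∈ {l : List Bool | l ∈ T ∧ l.length = n}, cyl l := by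
    ext x
    simp only [branches, Set.mem_iInter, Set.mem_iUnion, Set.mem_setOf_eq]
    constructor
    · intro hx n
      exact ⟨List.ofFn fun i : Fin n => x i, ⟨hx n, by simp⟩,
        fun i hi => by simp⟩
    · intro hx n
      obtain ⟨l, ⟨hl, hlen⟩, hx'⟩ := hx n
      have hle : l = List.ofFn fun i : Fin n => x i := by
        apply List.ext_getElem (by simp [hlen])
        intro i h1 h2
        simp only [List.getElem_ofFn]
        exact (hx' i h1).symm
      rwa [← hle]
  rw [h]
  exact MeasurableSet.iInter fun n =>
    MeasurableSet.biUnion (Set.to_countable _) fun l _ => measurable_cyl l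

lemma cyl_anti {s s' : List Bool} (h : s <+: s') : cyl s' ⊆ cyl s := by
  intro x hx i hi
  have := hx i (lt_of_lt_of_le hi h.length_le)
  rwa [← List.IsPrefix.getElem h hi] at this

lemma diff_bound (μ : Measure (ℕ → Bool)) [IsProbabilityMeasure μ]
    (hcyl : ∀ s : List Bool, μ (cyl s) = (1 / 2 : ENNReal) ^ s.length)
    (T : Set (List Bool)) (s : List Bool) (m : ℕ)
    (hTs : branches T ⊆ cyl s)
    (hTm : 1 - (2 : ℝ) ^ (-(m + 1) : ℤ) ≤ 2 ^ s.length * (μ (branches T)).toReal) :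
    (μ (cyl s \ branches T)).toReal ≤ (2 : ℝ) ^ (-(m + s.length + 1) : ℤ) := by
  have hd : μ (cyl s \ branches T) = μ (cyl s) - μ (branches T) :=
    measure_diff hTs (measurable_branches T).nullMeasurableSet (measure_ne_top μ _)
  rw [hd, ENNReal.toReal_sub_of_le (measure_mono hTs) (measure_ne_top μ _), hcyl s]
  set k := s.length
  set a := (μ (branches T)).toReal
  have hck : (((1 / 2 : ENNReal)) ^ k).toReal = ((2 : ℝ) ^ k)⁻¹ := by
    simp [ENNReal.toReal_pow]
  rw [hck]
  have e1 : (2 : ℝ) ^ (-(m + 1) : ℤ) = ((2 : ℝ) ^ (m + 1 : ℕ))⁻¹ := by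
    rw [show (-(m + 1) : ℤ) = -((m + 1 : ℕ) : ℤ) by push_cast; ring, zpow_neg, zpow_natCast]
  have e2 : (2 : ℝ) ^ (-(m + k + 1) : ℤ) = ((2 : ℝ) ^ (m + k + 1 : ℕ))⁻¹ := by
    rw [show (-(m + k + 1) : ℤ) = -((m + k + 1 : ℕ) : ℤ) by push_cast; ring, zpow_neg, zpow_natCast]
  rw [e1] at hTm
  rw [e2]
  have h1 : (0 : ℝ) < 2 ^ k := by positivity
  have h2 : (0 : ℝ) < 2 ^ (m + 1 : ℕ) := by positivity
  have h3 : (2 : ℝ) ^ (m + k + 1 : ℕ) = 2 ^ (m + 1 : ℕ) * 2 ^ k := by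
    rw [← pow_add]; ring_nf
  rw [h3, mul_inv]
  have hinv1 : (0 : ℝ) < ((2 : ℝ) ^ k)⁻¹ := by positivity
  have ha : ((2 : ℝ) ^ k)⁻¹ * (1 - ((2 : ℝ) ^ (m + 1 : ℕ))⁻¹) ≤ a := by
    have h := mul_le_mul_of_nonneg_left hTm hinv1.le
    rwa [← mul_assoc, inv_mul_cancel₀ h1.ne', one_mul] at h
  calc ((2 : ℝ) ^ k)⁻¹ - a
      ≤ ((2 : ℝ) ^ k)⁻¹ - ((2 : ℝ) ^ k)⁻¹ * (1 - ((2 : ℝ) ^ (m + 1 : ℕ))⁻¹) := by linarith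
    _ = ((2 : ℝ) ^ (m + 1 : ℕ))⁻¹ * ((2 : ℝ) ^ k)⁻¹ := by ring

/-- Measure estimate for random conditions: if `T ∈ B(s,m)`, `T' ∈ B(s',m')`
and `s ⊆ s'` with `k = |s|`, `k' = |s'|`, then
`μ([T] ∩ [s']) ≥ 2^{-k'} − 2^{-(m+k+1)}` and consequently
`μ([T] ∩ [T']) ≥ 2^{-k'} − 2^{-(m'+k'+1)} − 2^{-(m+k+1)}`.
Here `μ` is the fair-coin product probability measure on `2^ω`, characterized
by its values on cylinders. -/
theorem stmt19 (μ : Measure (ℕ → Bool)) (hprob : IsProbabilityMeasure μ)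
    (hcyl : ∀ s : List Bool, μ (cyl s) = (1 / 2 : ENNReal) ^ s.length)
    (T T' : Set (List Bool)) (hT : IsTree T) (hT' : IsTree T')
    (hTpos : 0 < μ (branches T)) (hT'pos : 0 < μ (branches T'))
    (s s' : List Bool) (hss' : s <+: s') (m m' : ℕ)
    (hTs : branches T ⊆ cyl s)
    (hTm : 1 - (2 : ℝ) ^ (-(m + 1) : ℤ) ≤
      2 ^ s.length * (μ (branches T)).toReal)
    (hT's : branches T' ⊆ cyl s')
    (hT'm : 1 - (2 : ℝ) ^ (-(m' + 1) : ℤ) ≤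
      2 ^ s'.length * (μ (branches T')).toReal) :
    (2 : ℝ) ^ (-(s'.length : ℤ)) - 2 ^ (-(m + s.length + 1) : ℤ) ≤
        (μ (branches T ∩ cyl s')).toReal ∧
      (2 : ℝ) ^ (-(s'.length : ℤ)) - 2 ^ (-(m' + s'.length + 1) : ℤ) -
          2 ^ (-(m + s.length + 1) : ℤ) ≤
        (μ (branches T ∩ branches T')).toReal := by
  have hb1 := diff_bound μ hcyl T s m hTs hTm
  have hb2 := diff_bound μ hcyl T' s' m' hT's hT'm
  -- μ (cyl s') ≤ μ (cyl s' ∩ bT) + μ (cyl s' \ bT)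
  have hsub1 : μ (cyl s') ≤ μ (branches T ∩ cyl s') + μ (cyl s \ branches T) := by
    calc μ (cyl s') ≤ μ (cyl s' ∩ branches T) + μ (cyl s' \ branches T) :=
          measure_le_inter_add_diff μ _ _
      _ = μ (branches T ∩ cyl s') + μ (cyl s' \ branches T) := by rw [Set.inter_comm]
      _ ≤ μ (branches T ∩ cyl s') + μ (cyl s \ branches T) :=
          add_le_add le_rfl (measure_mono (Set.diff_subset_diff_left (cyl_anti hss')))
  have hsub2 : μ (branches T ∩ cyl s') ≤ μ (branches T ∩ branches T') + μ (cyl s' \ branches T') := by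
    calc μ (branches T ∩ cyl s')
        ≤ μ ((branches T ∩ cyl s') ∩ branches T') + μ ((branches T ∩ cyl s') \ branches T') :=
          measure_le_inter_add_diff μ _ _
      _ ≤ μ (branches T ∩ branches T') + μ (cyl s' \ branches T') :=
          add_le_add (measure_mono fun x hx => ⟨hx.1.1, hx.2⟩)
            (measure_mono fun x hx => ⟨hx.1.2, hx.2⟩)
  have t1 : (μ (cyl s')).toReal ≤ (μ (branches T ∩ cyl s')).toReal + (μ (cyl s \ branches T)).toReal := by
    rw [← ENNReal.toReal_add (measure_ne_top μ _) (measure_ne_top μ _)]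
    exact ENNReal.toReal_mono (by finiteness) hsub1
  have t2 : (μ (branches T ∩ cyl s')).toReal ≤
      (μ (branches T ∩ branches T')).toReal + (μ (cyl s' \ branches T')).toReal := by
    rw [← ENNReal.toReal_add (measure_ne_top μ _) (measure_ne_top μ _)]
    exact ENNReal.toReal_mono (by finiteness) hsub2
  have hc' : (μ (cyl s')).toReal = (2 : ℝ) ^ (-(s'.length : ℤ)) := by
    rw [hcyl s', zpow_neg, zpow_natCast]
    simp [ENNReal.toReal_pow]
  constructor
  · linarith
  · linarith
end
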